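/- Let a be a Hermitian operator on H^(1)⊗…⊗H^(k) satisfying condition (★): for every pure product state p with Tr(a p) = 0, the separable tangent space C(p) is contained in I_a = {x Hermitian : Tr(x†a) = 0}. Suppose |e₁^(1)⟩, |e₂^(1)⟩ ∈ H^(1) are linearly independent unit vectors and |f⟩ ∈ H^(2)⊗…⊗H^(k) is a unit product vector such that the projectors onto |e₁^(1)⟩⊗|f⟩ and |e₂^(1)⟩⊗|f⟩ both lie in I_a. Then for every nonzero |g⟩ = α₁|e₁^(1)⟩ + α₂|e₂^(1)⟩ (α₁, α₂ ∈ ℂ), the projector onto the normalization of |g⟩⊗|f⟩ also lies in I_a. -/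

import Mathlib

open Matrix
open scoped ComplexOrder

namespace EWitness

/-- Operators on the tensor product `H⁽¹⁾ ⊗ ⋯ ⊗ H⁽ᵏ⁾` of finite-dimensional complex
Hilbert spaces (with `dim H⁽ⁱ⁾ = n i`), modeled as matrices indexed by tuples. -/
abbrev Op {k : ℕ} (n : Fin k → ℕ) := Matrix (∀ i, Fin (n i)) (∀ i, Fin (n i)) ℂ

/-- Tensor (Kronecker) product of one operator per tensor factor. -/
def tensorOp {k : ℕ} (n : Fin k → ℕ) (A : ∀ i, Matrix (Fin (n i)) (Fin (n i)) ℂ) : Op n :=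
  Matrix.of fun x y => ∏ i, A i (x i) (y i)

/-- Tensor product of one vector per tensor factor. -/
def tensorVec {k : ℕ} (n : Fin k → ℕ) (v : ∀ i, Fin (n i) → ℂ) : (∀ i, Fin (n i)) → ℂ :=
  fun x => ∏ i, v i (x i)

/-- The rank one projector `|v⟩⟨v|`. -/
def proj {m : Type*} (v : m → ℂ) : Matrix m m ℂ := Matrix.vecMulVec v (star v)

/-- The trace inner product `(a,b) = Tr(a† b)` (its real part; on the real vector space of
Hermitian operators this is exactly the trace inner product, which is real-valued there). -/
noncomputable def tinner {m : Type*} [Fintype m] (a b : Matrix m m ℂ) : ℝ :=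
  ((aᴴ * b).trace).re

/-- A state: a positive semidefinite trace-one operator. -/
noncomputable def IsState {m : Type*} [Fintype m] (ρ : Matrix m m ℂ) : Prop :=
  ρ.PosSemidef ∧ ρ.trace = 1

/-- A pure product state `⊗ᵢ |e⁽ⁱ⁾⟩⟨e⁽ⁱ⁾|` with the `e⁽ⁱ⁾` unit vectors. -/
def IsPureProduct {k : ℕ} (n : Fin k → ℕ) (p : Op n) : Prop :=
  ∃ e : ∀ i, Fin (n i) → ℂ,
    (∀ i, star (e i) ⬝ᵥ e i = 1) ∧ p = tensorOp n fun i => proj (e i)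

/-- A separable state: a finite convex combination of tensor products of states. -/
noncomputable def IsSeparable {k : ℕ} (n : Fin k → ℕ) (ϱ : Op n) : Prop :=
  ∃ (N : ℕ) (w : Fin N → ℝ) (ρ : Fin N → ∀ i, Matrix (Fin (n i)) (Fin (n i)) ℂ),
    (∀ j, 0 ≤ w j) ∧ ((∑ j, w j) = 1) ∧ (∀ j i, IsState (ρ j i)) ∧
    ϱ = ∑ j, (w j : ℂ) • tensorOp n (ρ j)

/-- The generating set of `τ⁽ⁱ⁾`: operators `I ⊗ ⋯ ⊗ h⁽ⁱ⁾ ⊗ ⋯ ⊗ I`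
with `h⁽ⁱ⁾` Hermitian and traceless. -/
def tauGen {k : ℕ} (n : Fin k → ℕ) (i : Fin k) : Set (Op n) :=
  {T | ∃ h : Matrix (Fin (n i)) (Fin (n i)) ℂ, h.IsHermitian ∧ h.trace = 0 ∧
      T = tensorOp n (Function.update (fun j => (1 : Matrix (Fin (n j)) (Fin (n j)) ℂ)) i h)}

/-- `τ⁽ⁱ⁾`: the real span of operators `I ⊗ ⋯ ⊗ h⁽ⁱ⁾ ⊗ ⋯ ⊗ I`. -/
noncomputable def tauComp {k : ℕ} (n : Fin k → ℕ) (i : Fin k) : Submodule ℝ (Op n) :=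
  Submodule.span ℝ (tauGen n i)

/-- `τ = span(⋃ᵢ τ⁽ⁱ⁾)`. -/
noncomputable def tau {k : ℕ} (n : Fin k → ℕ) : Submodule ℝ (Op n) :=
  Submodule.span ℝ (⋃ i, tauGen n i)

/-- The separable tangent space `C(p) = {i[p,t] : t ∈ τ}`. -/
def sepTangent {k : ℕ} (n : Fin k → ℕ) (p : Op n) : Set (Op n) :=
  {x | ∃ t ∈ tau n, x = Complex.I • (p * t - t * p)}

/-- Condition (★): for every pure product state `p` orthogonal to `a`, the separable tangent
space `C(p)` is contained in the hyperplane `I_a = {x : (x,a) = 0}`. -/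
def StarCond {k : ℕ} (n : Fin k → ℕ) (a : Op n) : Prop :=
  ∀ p : Op n, IsPureProduct n p → tinner a p = 0 →
    sepTangent n p ⊆ {x : Op n | tinner x a = 0}

/-- An operator is supported on a subspace `W` if it vanishes on the orthogonal
complement of `W` and its range is contained in `W`. -/
def SupportedOn {m : Type*} [Fintype m] (W : Submodule ℂ (m → ℂ)) (M : Matrix m m ℂ) : Prop :=
  (∀ v, M.mulVec v ∈ W) ∧ (∀ v, (∀ w ∈ W, star w ⬝ᵥ v = 0) → M.mulVec v = 0)

/-!
Write `B(x, y) = ⟨x ⊗ f| a |y ⊗ f⟩` for the form that `a` induces on the first factor. Condition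
(★) at the product state `e₁ ⊗ f`, with the tangent direction generated by
`h = |w⟩⟨e₁| + |e₁⟩⟨w|` (made traceless by subtracting a multiple of the identity), gives
`Im B(e₁, w) = 0`; replacing `w` by `i w` gives `B(e₁, w) = 0` for all `w`. Since `a` is Hermitian,
also `B(e₂, e₁) = 0` and `B(e₂, e₂) = 0`, so `B(g, g) = 0` for all `g` in the span of `e₁, e₂`.
-/

lemma proj_isHermitian {m : Type*} (v : m → ℂ) : (proj v).IsHermitian := by
  simp [proj, IsHermitian]

section SingleFactor

variable {m : Type*} [Fintype m]

lemma trace_proj_mul (v : m → ℂ) (a : Matrix m m ℂ) :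
    (proj v * a).trace = star v ⬝ᵥ a *ᵥ v := by
  rw [trace_mul_comm, proj, mul_vecMulVec, trace_vecMulVec, dotProduct_comm]

lemma tinner_comm (a b : Matrix m m ℂ) : tinner a b = tinner b a := by
  rw [tinner, tinner, ← Complex.conj_re, ← Complex.star_def, ← trace_conjTranspose,
    conjTranspose_mul, conjTranspose_conjTranspose]

lemma star_star_dotProduct_mulVec (A : Matrix m m ℂ) (x y : m → ℂ) :
    star (star x ⬝ᵥ A *ᵥ y) = star y ⬝ᵥ Aᴴ *ᵥ x := by
  rw [star_dotProduct, star_star, star_mulVec, ← dotProduct_mulVec]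

lemma tinner_I_smul_commutator_proj {a t : Matrix m m ℂ} (ha : a.IsHermitian)
    (ht : t.IsHermitian) (V : m → ℂ) :
    tinner (Complex.I • (proj V * t - t * proj V)) a = 2 * (star V ⬝ᵥ a *ᵥ (t *ᵥ V)).im := by
  set z := star V ⬝ᵥ a *ᵥ (t *ᵥ V)
  have hX : (Complex.I • (proj V * t - t * proj V))ᴴ = Complex.I • (proj V * t - t * proj V) := by
    simp only [conjTranspose_smul, conjTranspose_sub, conjTranspose_mul, ht.eq,
      (proj_isHermitian V).eq, Complex.star_def, Complex.conj_I, neg_smul, smul_sub]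
    abel
  have htpa : (t * proj V * a).trace = z := by
    rw [mul_assoc, trace_mul_comm, mul_assoc, trace_proj_mul, ← mulVec_mulVec]
  have hpta : (proj V * t * a).trace = star z := by
    rw [mul_assoc, trace_proj_mul, star_star_dotProduct_mulVec, ha.eq, star_mulVec, ht.eq,
      ← dotProduct_mulVec, mulVec_mulVec]
  rw [tinner, hX, smul_mul, sub_mul, trace_smul, trace_sub, htpa, hpta, smul_eq_mul]
  simp [Complex.mul_re]
  ring

lemma star_dotProduct_mulVec_self_eq_zero_of_re_eq_zero {a : Matrix m m ℂ} (ha : a.IsHermitian)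
    {v : m → ℂ} (hv : (star v ⬝ᵥ a *ᵥ v).re = 0) : star v ⬝ᵥ a *ᵥ v = 0 :=
  Complex.ext hv (ha.im_star_dotProduct_mulVec_self v)

lemma tinner_proj (v : m → ℂ) (a : Matrix m m ℂ) :
    tinner (proj v) a = (star v ⬝ᵥ a *ᵥ v).re := by
  rw [tinner, (proj_isHermitian v).eq, trace_proj_mul]

end SingleFactor

lemma eq_zero_of_forall_im_eq_zero {M : Type*} [AddCommGroup M] [Module ℂ M] (φ : M →ₗ[ℂ] ℂ)
    (hφ : ∀ v, (φ v).im = 0) : φ = 0 :=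
  LinearMap.ext fun v => Complex.ext (by simpa using hφ (Complex.I • v)) (hφ v)

section TracelessPerturbation

variable {m : Type*} [Fintype m] [DecidableEq m]

lemma isHermitian_sub_trace_div_smul_one {h : Matrix m m ℂ} (hh : h.IsHermitian) :
    (h - (h.trace / Fintype.card m) • 1).IsHermitian := by
  have htr : star h.trace = h.trace := by rw [← trace_conjTranspose, hh.eq]
  refine hh.sub ?_
  rw [IsHermitian, conjTranspose_smul, conjTranspose_one, star_div₀, htr, star_natCast]

lemma trace_sub_trace_div_smul_one (h : Matrix m m ℂ) :
    (h - (h.trace / Fintype.card m) • 1).trace = 0 := by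
  rcases isEmpty_or_nonempty m with hm | hm
  · simp [trace]
  · rw [trace_sub, trace_smul, trace_one, smul_eq_mul, div_mul_cancel₀ _ (by simp), sub_self]

lemma eq_zero_of_forall_traceless_im_apply_mulVec_eq_zero (φ : (m → ℂ) →ₗ[ℂ] ℂ) {e : m → ℂ}
    (he : star e ⬝ᵥ e = 1) (hφe : φ e = 0)
    (hφ : ∀ h : Matrix m m ℂ, h.IsHermitian → h.trace = 0 → (φ (h *ᵥ e)).im = 0) : φ = 0 := by
  refine eq_zero_of_forall_im_eq_zero φ fun w => ?_
  set h := vecMulVec w (star e) + vecMulVec e (star w)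
  have hh : h.IsHermitian := by simp [h, IsHermitian, add_comm]
  have hhe : h *ᵥ e = w + (star w ⬝ᵥ e) • e := by simp [h, add_mulVec, vecMulVec_mulVec, he]
  simpa [sub_mulVec, smul_mulVec, hhe, hφe] using
    hφ _ (isHermitian_sub_trace_div_smul_one hh) (trace_sub_trace_div_smul_one h)

end TracelessPerturbation

section Tensor

variable {k : ℕ} (n : Fin k → ℕ)

/-- `tensorVec n` as a multilinear map; the underlying functions agree definitionally, and so do
`tensorOpMultilinear n` and `tensorOp n`. -/
def tensorVecMultilinear :
    MultilinearMap ℂ (fun i => Fin (n i) → ℂ) ((∀ i, Fin (n i)) → ℂ) :=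
  MultilinearMap.pi fun x =>
    (MultilinearMap.mkPiAlgebra ℂ (Fin k) ℂ).compLinearMap fun i => LinearMap.proj (x i)

def tensorOpMultilinear :
    MultilinearMap ℂ (fun i => Matrix (Fin (n i)) (Fin (n i)) ℂ) (Op n) :=
  MultilinearMap.pi fun x => MultilinearMap.pi fun y =>
    (MultilinearMap.mkPiAlgebra ℂ (Fin k) ℂ).compLinearMap fun i => entryLinearMap ℂ ℂ (x i) (y i)

lemma tensorOp_update_smul (A : ∀ i, Matrix (Fin (n i)) (Fin (n i)) ℂ) (i₀ : Fin k) (c : ℂ)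
    (M : Matrix (Fin (n i₀)) (Fin (n i₀)) ℂ) :
    tensorOp n (Function.update A i₀ (c • M)) = c • tensorOp n (Function.update A i₀ M) :=
  (tensorOpMultilinear n).map_update_smul A i₀ c M

lemma tensorOp_mulVec_tensorVec (A : ∀ i, Matrix (Fin (n i)) (Fin (n i)) ℂ)
    (v : ∀ i, Fin (n i) → ℂ) :
    tensorOp n A *ᵥ tensorVec n v = tensorVec n fun i => A i *ᵥ v i := by
  funext x
  simp only [mulVec, dotProduct, tensorOp, tensorVec, of_apply]
  rw [Finset.prod_univ_sum, Fintype.piFinset_univ]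
  exact Finset.sum_congr rfl fun y _ => Finset.prod_mul_distrib.symm

lemma tensorOp_proj (v : ∀ i, Fin (n i) → ℂ) :
    tensorOp n (fun i => proj (v i)) = proj (tensorVec n v) := by
  ext x y
  simp [tensorOp, proj, vecMulVec_apply, tensorVec, Finset.prod_mul_distrib]

lemma tensorOp_update_proj (u : ∀ i, Fin (n i) → ℂ) (i₀ : Fin k) (g : Fin (n i₀) → ℂ) :
    tensorOp n (Function.update (fun i => proj (u i)) i₀ (proj g))
      = proj (tensorVec n (Function.update u i₀ g)) := by
  rw [← tensorOp_proj]
  congr 1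
  funext i
  exact (Function.apply_update (fun _ => proj) u i₀ g i).symm

lemma isHermitian_tensorOp {A : ∀ i, Matrix (Fin (n i)) (Fin (n i)) ℂ}
    (hA : ∀ i, (A i).IsHermitian) : (tensorOp n A).IsHermitian := by
  ext x y
  simp [tensorOp, conjTranspose_apply, fun i => (hA i).apply]

lemma isHermitian_tensorOp_update_one {i₀ : Fin k} {h : Matrix (Fin (n i₀)) (Fin (n i₀)) ℂ}
    (hh : h.IsHermitian) : (tensorOp n (Function.update (fun _ => 1) i₀ h)).IsHermitian :=
  isHermitian_tensorOp n fun i => by rcases eq_or_ne i i₀ with rfl | hi <;> simp [*]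

lemma tensorOp_update_one_mulVec_tensorVec_update (u : ∀ i, Fin (n i) → ℂ) (i₀ : Fin k)
    (h : Matrix (Fin (n i₀)) (Fin (n i₀)) ℂ) (e : Fin (n i₀) → ℂ) :
    tensorOp n (Function.update (fun _ => 1) i₀ h) *ᵥ tensorVec n (Function.update u i₀ e)
      = tensorVec n (Function.update u i₀ (h *ᵥ e)) := by
  rw [tensorOp_mulVec_tensorVec]
  congr 1
  funext i
  rcases eq_or_ne i i₀ with rfl | hi <;> simp [*]

variable {n}

lemma mem_tau_of_isHermitian_of_trace_eq_zero (i₀ : Fin k)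
    {h : Matrix (Fin (n i₀)) (Fin (n i₀)) ℂ} (hh : h.IsHermitian) (htr : h.trace = 0) :
    tensorOp n (Function.update (fun _ => 1) i₀ h) ∈ tau n :=
  Submodule.subset_span (Set.mem_iUnion.2 ⟨i₀, h, hh, htr, rfl⟩)

end Tensor

namespace StarCond

variable {k : ℕ} {n : Fin k → ℕ} {a : Op n}

lemma im_dotProduct_mulVec_eq_zero (hstar : StarCond n a) (ha : a.IsHermitian)
    {v : ∀ i, Fin (n i) → ℂ} (hv : ∀ i, star (v i) ⬝ᵥ v i = 1)
    (hz : tinner (proj (tensorVec n v)) a = 0) {t : Op n} (ht : t ∈ tau n)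
    (hth : t.IsHermitian) :
    (star (tensorVec n v) ⬝ᵥ a *ᵥ (t *ᵥ tensorVec n v)).im = 0 := by
  have h := hstar _ ⟨v, hv, (tensorOp_proj n v).symm⟩ (by rwa [tinner_comm]) ⟨t, ht, rfl⟩
  rw [Set.mem_ofPred_eq, tinner_I_smul_commutator_proj ha hth] at h
  linarith

lemma dotProduct_mulVec_tensorVec_update_eq_zero (hstar : StarCond n a) (ha : a.IsHermitian)
    {u : ∀ i, Fin (n i) → ℂ} {i₀ : Fin k} (hu : ∀ i, i ≠ i₀ → star (u i) ⬝ᵥ u i = 1)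
    {e : Fin (n i₀) → ℂ} (he : star e ⬝ᵥ e = 1)
    (hz : tinner (tensorOp n (Function.update (fun i => proj (u i)) i₀ (proj e))) a = 0)
    (w : Fin (n i₀) → ℂ) :
    star (tensorVec n (Function.update u i₀ e)) ⬝ᵥ a *ᵥ tensorVec n (Function.update u i₀ w)
      = 0 := by
  set L := (tensorVecMultilinear n).toLinearMap u i₀
  set V := tensorVec n (Function.update u i₀ e)
  have hv : ∀ i, star (Function.update u i₀ e i) ⬝ᵥ Function.update u i₀ e i = 1 := by
    intro i
    rcases eq_or_ne i i₀ with rfl | hi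
    · simpa using he
    · simpa [hi] using hu i hi
  rw [tensorOp_update_proj] at hz
  let φ : (Fin (n i₀) → ℂ) →ₗ[ℂ] ℂ :=
    { toFun := fun w => star V ⬝ᵥ a *ᵥ L w
      map_add' := by simp [mulVec_add, dotProduct_add]
      map_smul' := by simp [mulVec_smul, dotProduct_smul] }
  suffices φ = 0 from LinearMap.congr_fun this w
  refine eq_zero_of_forall_traceless_im_apply_mulVec_eq_zero φ he
    (star_dotProduct_mulVec_self_eq_zero_of_re_eq_zero ha (by rwa [tinner_proj] at hz))
    fun h hh htr => ?_
  have := im_dotProduct_mulVec_eq_zero hstar ha hv hz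
    (mem_tau_of_isHermitian_of_trace_eq_zero i₀ hh htr) (isHermitian_tensorOp_update_one n hh)
  rwa [tensorOp_update_one_mulVec_tensorVec_update] at this

end StarCond

theorem line_of_product_projections_in_hyperplane_general {k : ℕ} [NeZero k] (n : Fin k → ℕ)
    (a : Op n) (ha : a.IsHermitian) (hstar : StarCond n a)
    (e₁ e₂ : Fin (n 0) → ℂ) (he₁ : star e₁ ⬝ᵥ e₁ = 1)
    (u : ∀ i, Fin (n i) → ℂ) (hu : ∀ i, i ≠ 0 → star (u i) ⬝ᵥ u i = 1)
    (hz₁ : tinner (tensorOp n (Function.update (fun i => proj (u i)) 0 (proj e₁))) a = 0)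
    (hz₂ : tinner (tensorOp n (Function.update (fun i => proj (u i)) 0 (proj e₂))) a = 0) :
    ∀ α₁ α₂ : ℂ, α₁ • e₁ + α₂ • e₂ ≠ 0 →
      tinner (tensorOp n (Function.update (fun i => proj (u i)) 0
        ((star (α₁ • e₁ + α₂ • e₂) ⬝ᵥ (α₁ • e₁ + α₂ • e₂))⁻¹ •
          proj (α₁ • e₁ + α₂ • e₂)))) a = 0 := by
  intro α₁ α₂ _
  set L := (tensorVecMultilinear n).toLinearMap u 0
  have h₁ : ∀ w, star (L e₁) ⬝ᵥ a *ᵥ L w = 0 :=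
    hstar.dotProduct_mulVec_tensorVec_update_eq_zero ha hu he₁ hz₁
  have h₂₁ : star (L e₂) ⬝ᵥ a *ᵥ L e₁ = 0 := by
    rw [← ha.eq, ← star_star_dotProduct_mulVec, h₁ e₂, star_zero]
  have h₂₂ : star (L e₂) ⬝ᵥ a *ᵥ L e₂ = 0 := by
    rw [tensorOp_update_proj, tinner_proj] at hz₂
    exact star_dotProduct_mulVec_self_eq_zero_of_re_eq_zero ha hz₂
  have hg : star (L (α₁ • e₁ + α₂ • e₂)) ⬝ᵥ a *ᵥ L (α₁ • e₁ + α₂ • e₂) = 0 := by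
    simp only [map_add, map_smul, star_add, star_smul, mulVec_add, mulVec_smul, add_dotProduct,
      smul_dotProduct, dotProduct_add, dotProduct_smul, h₁, h₂₁, h₂₂, smul_zero, add_zero]
  rw [tensorOp_update_smul, tinner, conjTranspose_smul, smul_mul, trace_smul,
    tensorOp_update_proj, (proj_isHermitian _).eq, trace_proj_mul]
  change ((_ : ℂ) • (star (L _) ⬝ᵥ a *ᵥ L _)).re = 0
  rw [hg, smul_zero, Complex.zero_re]

/-- Suppose the Hermitian operator `a` satisfies condition (★).  If
`|e₁⟩, |e₂⟩ ∈ H⁽¹⁾` are linearly independent unit vectors and `|f⟩ = ⊗ᵢ |u i⟩` is a unit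
product vector in the remaining factors such that the projectors onto `|e₁⟩⊗|f⟩` and
`|e₂⟩⊗|f⟩` lie in `I_a`, then for every nonzero `|g⟩ = α₁|e₁⟩ + α₂|e₂⟩`, the projector
onto the normalization of `|g⟩⊗|f⟩` also lies in `I_a`. -/
theorem line_of_product_projections_in_hyperplane {k : ℕ} [NeZero k] (n : Fin k → ℕ)
    (a : Op n) (ha : a.IsHermitian) (hstar : StarCond n a)
    (e₁ e₂ : Fin (n 0) → ℂ) (he₁ : star e₁ ⬝ᵥ e₁ = 1) (he₂ : star e₂ ⬝ᵥ e₂ = 1)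
    (hli : LinearIndependent ℂ ![e₁, e₂])
    (u : ∀ i, Fin (n i) → ℂ) (hu : ∀ i, i ≠ 0 → star (u i) ⬝ᵥ u i = 1)
    (hz₁ : tinner (tensorOp n (Function.update (fun i => proj (u i)) 0 (proj e₁))) a = 0)
    (hz₂ : tinner (tensorOp n (Function.update (fun i => proj (u i)) 0 (proj e₂))) a = 0) :
    ∀ α₁ α₂ : ℂ, α₁ • e₁ + α₂ • e₂ ≠ 0 →
      tinner (tensorOp n (Function.update (fun i => proj (u i)) 0
        ((star (α₁ • e₁ + α₂ • e₂) ⬝ᵥ (α₁ • e₁ + α₂ • e₂))⁻¹ •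
          proj (α₁ • e₁ + α₂ • e₂)))) a = 0 :=
  line_of_product_projections_in_hyperplane_general n a ha hstar e₁ e₂ he₁ u hu hz₁ hz₂

end EWitness
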